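/- Let A be a commutative ring and I an ideal of A with Ann_A(I) = 0. Then there is an isomorphism of A-modules Hom_{A ⋈ I}(A, A ⋈ I) ≅ I × 0, where A is regarded as an A ⋈ I-module via the surjection A ⋈ I → A, (a, a+i) ↦ a, and I × 0 = {(i,0) : i ∈ I} is an ideal of A ⋈ I. -/

import Mathlib

variable {A : Type} [CommRing A]

/-- The amalgamated duplication `A ⋈ I = {(a, a + i) : a ∈ A, i ∈ I}`. -/
def AmalgDup (I : Ideal A) : Subring (A × A) where
  carrier := {x | ∃ a : A, ∃ i ∈ I, x = (a, a + i)}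
  zero_mem' := ⟨0, 0, I.zero_mem, by ext <;> simp⟩
  one_mem' := ⟨1, 0, I.zero_mem, by ext <;> simp⟩
  add_mem' := by
    rintro x y ⟨a, i, hi, rfl⟩ ⟨b, k, hk, rfl⟩
    exact ⟨a + b, i + k, I.add_mem hi hk, by
      simp only [Prod.mk_add_mk, Prod.mk.injEq]
      exact ⟨trivial, by ring⟩⟩
  neg_mem' := by
    rintro x ⟨a, i, hi, rfl⟩
    exact ⟨-a, -i, I.neg_mem hi, by
      simp only [Prod.neg_mk, Prod.mk.injEq]
      exact ⟨trivial, by ring⟩⟩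
  mul_mem' := by
    rintro x y ⟨a, i, hi, rfl⟩ ⟨b, k, hk, rfl⟩
    exact ⟨a * b, a * k + i * b + i * k,
      I.add_mem (I.add_mem (I.mul_mem_left _ hk) (I.mul_mem_right _ hi)) (I.mul_mem_right _ hi),
      by
      simp only [Prod.mk_mul_mk, Prod.mk.injEq]
      exact ⟨trivial, by ring⟩⟩

/-- The canonical ring homomorphism `A → A ⋈ I`, `a ↦ (a, a)`. -/
def AmalgDup.incl (I : Ideal A) : A →+* AmalgDup I where
  toFun a := ⟨(a, a), a, 0, I.zero_mem, by simp⟩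
  map_one' := Subtype.ext (by simp)
  map_mul' x y := Subtype.ext (by simp [Prod.mk_mul_mk])
  map_zero' := Subtype.ext (by simp)
  map_add' x y := Subtype.ext (by simp [Prod.mk_add_mk])

/-- The projection `A ⋈ I → A`, `(a, a + i) ↦ a`; it is surjective with kernel `0 × I`. -/
def AmalgDup.proj (I : Ideal A) : AmalgDup I →+* A :=
  (RingHom.fst A A).comp (AmalgDup I).subtype

/-- The ideal `I × 0 = {(i, 0) : i ∈ I}` of `A ⋈ I`. -/
def AmalgDup.idealI0 (I : Ideal A) : Ideal (AmalgDup I) where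
  carrier := {x | ∃ i ∈ I, (x : A × A) = (i, 0)}
  zero_mem' := ⟨0, I.zero_mem, by ext <;> simp⟩
  add_mem' := by
    rintro x y ⟨i, hi, hx⟩ ⟨k, hk, hy⟩
    refine ⟨i + k, I.add_mem hi hk, ?_⟩
    have : ((x + y : AmalgDup I) : A × A) = (x : A × A) + (y : A × A) := rfl
    rw [this, hx, hy]
    simp
  smul_mem' := by
    rintro c x ⟨i, hi, hx⟩
    refine ⟨(c : A × A).1 * i, I.mul_mem_left _ hi, ?_⟩
    have : ((c • x : AmalgDup I) : A × A) = (c : A × A) * (x : A × A) := rfl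
    rw [this, hx]
    simp [Prod.ext_iff]

/-!
A linear map `A → A ⋈ I` over `A ⋈ I` is determined by the image of `1`, and
`A ≅ (A ⋈ I) ⧸ (0 × I)`, so these maps correspond to the elements of `A ⋈ I` killed by
`0 × I`. Since `(0, i) * (a, a + j) = (0, i * (a + j))`, such an element has
`a + j ∈ Ann_A(I) = 0`, i.e. it is `(a, 0)` with `a = -j ∈ I`.
-/

open Submodule

namespace Algebra

variable {R S M : Type*} [CommRing R] [CommRing S] [Algebra R S] [AddCommGroup M] [Module R M]

theorem smul_eq_smul_of_algebraMap_eq {m : M}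
    (hm : m ∈ torsionBySet R M (RingHom.ker (algebraMap R S))) {r r' : R}
    (h : algebraMap R S r = algebraMap R S r') : r • m = r' • m := by
  rw [← sub_eq_zero, ← sub_smul]
  exact (mem_torsionBySet_iff _ _).mp hm ⟨r - r', by simp [RingHom.mem_ker, h]⟩

theorem apply_one_mem_torsionBySet_ker (f : S →ₗ[R] M) :
    f 1 ∈ torsionBySet R M (RingHom.ker (algebraMap R S)) := by
  rw [mem_torsionBySet_iff]
  rintro ⟨r, hr⟩
  rw [← f.map_smul, ← algebraMap_eq_smul_one, hr, map_zero]

variable (R S M) in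
/-- `Hom_R(R ⧸ J, M) ≅ M[J]`, for `S ≅ R ⧸ J` presented through a surjection. -/
noncomputable def linearMapEquivTorsionBySetKer (hS : Function.Surjective (algebraMap R S)) :
    (S →ₗ[R] M) ≃ₗ[R] torsionBySet R M (RingHom.ker (algebraMap R S)) where
  toFun f := ⟨f 1, apply_one_mem_torsionBySet_ker f⟩
  map_add' _ _ := rfl
  map_smul' _ _ := rfl
  invFun m :=
    { toFun s := Function.surjInv hS s • (m : M)
      map_add' s t := by
        rw [← add_smul]
        exact smul_eq_smul_of_algebraMap_eq m.2 (by simp [Function.surjInv_eq hS])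
      map_smul' r s := by
        rw [RingHom.id_apply, smul_smul]
        exact smul_eq_smul_of_algebraMap_eq m.2 (by simp [Function.surjInv_eq hS, smul_def]) }
  left_inv f := LinearMap.ext fun s => by
    simp only [LinearMap.coe_mk, AddHom.coe_mk]
    rw [← f.map_smul, ← algebraMap_eq_smul_one, Function.surjInv_eq hS]
  right_inv m := Subtype.ext <| by
    simp only [LinearMap.coe_mk, AddHom.coe_mk]
    exact (smul_eq_smul_of_algebraMap_eq m.2 (r' := 1) (by simp [Function.surjInv_eq hS])).trans
      (one_smul R _)

end Algebra

namespace AmalgDup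

variable {I : Ideal A}

theorem proj_surjective : Function.Surjective (proj I) := fun a => ⟨incl I a, rfl⟩

theorem mem_ker_proj {x : AmalgDup I} :
    x ∈ RingHom.ker (proj I) ↔ ∃ i ∈ I, (x : A × A) = (0, i) := by
  obtain ⟨a, i, hi, hx⟩ := x.2
  simp only [RingHom.mem_ker, proj, RingHom.comp_apply, Subring.coe_subtype, RingHom.coe_fst, hx]
  constructor
  · rintro rfl
    exact ⟨i, hi, by simp⟩
  · rintro ⟨j, -, hj⟩
    exact congrArg Prod.fst hj

theorem torsionBySet_ker_proj (hann : ∀ a : A, (∀ i ∈ I, a * i = 0) → a = 0) :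
    torsionBySet (AmalgDup I) (AmalgDup I) (RingHom.ker (proj I)) = idealI0 I := by
  ext x
  rw [mem_torsionBySet_iff]
  obtain ⟨a, j, hj, hx⟩ := x.2
  constructor
  · intro hx0
    have hsum : a + j = 0 := hann _ fun i hi => by
      have := congrArg (fun y : AmalgDup I => (y : A × A).2)
        (hx0 ⟨⟨(0, i), 0, i, hi, by simp⟩, mem_ker_proj.mpr ⟨i, hi, rfl⟩⟩)
      simpa [hx, mul_comm] using this
    refine ⟨a, ?_, by rw [hx, hsum]⟩
    rw [eq_neg_of_add_eq_zero_left hsum]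
    exact I.neg_mem hj
  · rintro ⟨i, -, hxi⟩ ⟨k, hk⟩
    obtain ⟨j', -, hk'⟩ := mem_ker_proj.mp hk
    apply Subtype.ext
    change (k : A × A) * (x : A × A) = 0
    simp [hk', hxi]

end AmalgDup

theorem amalgDup_hom_iso (I : Ideal A)
    (hann : ∀ a : A, (∀ i ∈ I, a * i = 0) → a = 0) :
    letI : Module (AmalgDup I) A := Module.compHom _ (AmalgDup.proj I)
    letI : Module A (A →ₗ[AmalgDup I] AmalgDup I) :=
      Module.compHom _ (AmalgDup.incl I)
    letI : Module A (AmalgDup.idealI0 I) := Module.compHom _ (AmalgDup.incl I)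
    Nonempty ((A →ₗ[AmalgDup I] AmalgDup I) ≃ₗ[A] AmalgDup.idealI0 I) := by
  let := (AmalgDup.proj I).toAlgebra
  let : Module A (A →ₗ[AmalgDup I] AmalgDup I) := Module.compHom _ (AmalgDup.incl I)
  let : Module A (AmalgDup.idealI0 I) := Module.compHom _ (AmalgDup.incl I)
  let e := (Algebra.linearMapEquivTorsionBySetKer (AmalgDup I) A (AmalgDup I)
    AmalgDup.proj_surjective).trans (LinearEquiv.ofEq _ _ (AmalgDup.torsionBySet_ker_proj hann))
  exact ⟨{ e with map_smul' := fun a f => e.map_smul (AmalgDup.incl I a) f }⟩
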